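/- There exists a partial tatami covering of a rectangular grid that cannot be extended to a complete tatami covering, even though no tatami violation is present in the partial covering itself. -/

import Mathlib

open scoped Classical

/-- A cell `(i, j)` lies in row `i` and column `j`. -/
abbrev Cell : Type := ℤ × ℤ

/-- A tile: a monomino, a horizontal domino (covering `(i,j)` and `(i,j+1)`),
or a vertical domino (covering `(i,j)` and `(i+1,j)`), identified by its
top-left cell. -/
inductive Tile : Type where
  | mono : Cell → Tile
  | hdom : Cell → Tile
  | vdom : Cell → Tile
deriving DecidableEq

/-- The set of cells covered by a tile. -/
def Tile.cells : Tile → Finset Cell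
  | .mono c => {c}
  | .hdom c => {c, (c.1, c.2 + 1)}
  | .vdom c => {c, (c.1 + 1, c.2)}

def Tile.IsMono : Tile → Prop
  | .mono _ => True
  | _ => False

def Tile.IsHoriz : Tile → Prop
  | .hdom _ => True
  | _ => False

def Tile.IsVert : Tile → Prop
  | .vdom _ => True
  | _ => False

def Tile.IsDomino : Tile → Prop
  | .mono _ => False
  | _ => True

/-- The `r × c` grid of cells (r rows, c columns). -/
noncomputable def grid (r c : ℕ) : Finset Cell :=
  Finset.Ico (0 : ℤ) (r : ℤ) ×ˢ Finset.Ico (0 : ℤ) (c : ℤ)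

/-- The four cells incident to the grid vertex `v` (the lattice point `v`,
viewed as the common corner of these four cells). -/
def vtxCells (v : Cell) : Finset Cell :=
  {(v.1 - 1, v.2 - 1), (v.1 - 1, v.2), (v.1, v.2 - 1), v}

/-- Four pairwise distinct tiles of `T` meet at the grid vertex `v`:
the four cells incident to `v` are covered by four distinct tiles. -/
def FourMeet (T : Finset Tile) (v : Cell) : Prop :=
  ∃ t₁ ∈ T, ∃ t₂ ∈ T, ∃ t₃ ∈ T, ∃ t₄ ∈ T,
    (v.1 - 1, v.2 - 1) ∈ t₁.cells ∧ (v.1 - 1, v.2) ∈ t₂.cells ∧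
    (v.1, v.2 - 1) ∈ t₃.cells ∧ v ∈ t₄.cells ∧
    t₁ ≠ t₂ ∧ t₁ ≠ t₃ ∧ t₁ ≠ t₄ ∧ t₂ ≠ t₃ ∧ t₂ ≠ t₄ ∧ t₃ ≠ t₄

/-- `T` is a covering (partition into tiles) of the region `R`. -/
def IsCovering (T : Finset Tile) (R : Finset Cell) : Prop :=
  (∀ t₁ ∈ T, ∀ t₂ ∈ T, t₁ ≠ t₂ → Disjoint t₁.cells t₂.cells) ∧
  (∀ x : Cell, x ∈ R ↔ ∃ t ∈ T, x ∈ t.cells)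

/-- `T` is a tatami covering of `R`: a covering in which no four tiles meet
at any grid vertex. -/
def IsTatami (T : Finset Tile) (R : Finset Cell) : Prop :=
  IsCovering T R ∧ ∀ v : Cell, ¬ FourMeet T v

/-- The number of monominoes in `T`. -/
noncomputable def monoCount (T : Finset Tile) : ℕ :=
  (T.filter Tile.IsMono).card

/-- The number of vertical dominoes in `T`. -/
noncomputable def vertCount (T : Finset Tile) : ℕ :=
  (T.filter Tile.IsVert).card

/-- `v` is an interior grid vertex of the region `R`: all four incident
cells belong to `R`. -/
def InteriorVtx (R : Finset Cell) (v : Cell) : Prop :=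
  (v.1 - 1, v.2 - 1) ∈ R ∧ (v.1 - 1, v.2) ∈ R ∧ (v.1, v.2 - 1) ∈ R ∧ v ∈ R

theorem exists_nonextendable_partial_tatami :
    ∃ (r c : ℕ) (p : Finset Tile),
      (∀ t ∈ p, t.cells ⊆ grid r c) ∧
      (∀ t₁ ∈ p, ∀ t₂ ∈ p, t₁ ≠ t₂ → Disjoint t₁.cells t₂.cells) ∧
      (∀ v : Cell, ¬ FourMeet p v) ∧
      ¬ ∃ T : Finset Tile, IsTatami T (grid r c) ∧ p ⊆ T := by
  refine ⟨2, 2, {Tile.mono (0,0), Tile.mono (1,1)}, ?_, ?_, ?_, ?_⟩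
  · intro t ht
    simp only [Finset.mem_insert, Finset.mem_singleton] at ht
    rcases ht with rfl | rfl <;> decide
  · intro t₁ h₁ t₂ h₂ hne
    simp only [Finset.mem_insert, Finset.mem_singleton] at h₁ h₂
    rcases h₁ with rfl | rfl <;> rcases h₂ with rfl | rfl <;>
      first | (exact absurd rfl hne) | decide
  · rintro v ⟨t₁, h₁, t₂, h₂, t₃, h₃, t₄, h₄, _, _, _, _, hn12, hn13, _, hn23, _, _⟩
    simp only [Finset.mem_insert, Finset.mem_singleton] at h₁ h₂ h₃
    rcases h₁ with rfl | rfl <;> rcases h₂ with rfl | rfl <;> rcases h₃ with rfl | rfl <;>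
      simp_all
  · rintro ⟨T, ⟨⟨hdisj, hcov⟩, hfour⟩, hsub⟩
    have hm00 : Tile.mono (0,0) ∈ T := hsub (by decide)
    have hm11 : Tile.mono (1,1) ∈ T := hsub (by decide)
    have h01 : Tile.mono (0,1) ∈ T := by
      obtain ⟨t, ht, htc⟩ := (hcov (0,1)).mp (by decide)
      match t with
      | .mono c =>
        simp only [Tile.cells, Finset.mem_singleton] at htc
        subst htc; exact ht
      | .hdom ⟨a, b⟩ =>
        simp only [Tile.cells, Finset.mem_insert, Finset.mem_singleton, Prod.mk.injEq] at htc
        rcases htc with ⟨rfl, rfl⟩ | ⟨rfl, hb⟩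
        · exact absurd ((hcov (0,2)).mpr ⟨_, ht, by decide⟩) (by decide)
        · have hb' : b = 0 := by omega
          subst hb'
          have hd := hdisj _ ht _ hm00 (by decide)
          exact absurd (Finset.disjoint_left.mp hd (by decide)
            (by decide : ((0:ℤ),(0:ℤ)) ∈ (Tile.mono (0,0)).cells)) (fun h => h)
      | .vdom ⟨a, b⟩ =>
        simp only [Tile.cells, Finset.mem_insert, Finset.mem_singleton, Prod.mk.injEq] at htc
        rcases htc with ⟨rfl, rfl⟩ | ⟨ha, rfl⟩
        · have hd := hdisj _ ht _ hm11 (by decide)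
          exact absurd (Finset.disjoint_left.mp hd (by decide)
            (by decide : ((1:ℤ),(1:ℤ)) ∈ (Tile.mono (1,1)).cells)) (fun h => h)
        · have ha' : a = -1 := by omega
          subst ha'
          exact absurd ((hcov (-1,1)).mpr ⟨_, ht, by decide⟩) (by decide)
    have h10 : Tile.mono (1,0) ∈ T := by
      obtain ⟨t, ht, htc⟩ := (hcov (1,0)).mp (by decide)
      match t with
      | .mono c =>
        simp only [Tile.cells, Finset.mem_singleton] at htc
        subst htc; exact ht
      | .hdom ⟨a, b⟩ =>
        simp only [Tile.cells, Finset.mem_insert, Finset.mem_singleton, Prod.mk.injEq] at htc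
        rcases htc with ⟨rfl, rfl⟩ | ⟨rfl, hb⟩
        · have hd := hdisj _ ht _ hm11 (by decide)
          exact absurd (Finset.disjoint_left.mp hd (by decide)
            (by decide : ((1:ℤ),(1:ℤ)) ∈ (Tile.mono (1,1)).cells)) (fun h => h)
        · have hb' : b = -1 := by omega
          subst hb'
          exact absurd ((hcov (1,-1)).mpr ⟨_, ht, by decide⟩) (by decide)
      | .vdom ⟨a, b⟩ =>
        simp only [Tile.cells, Finset.mem_insert, Finset.mem_singleton, Prod.mk.injEq] at htc
        rcases htc with ⟨rfl, rfl⟩ | ⟨ha, rfl⟩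
        · exact absurd ((hcov (2,0)).mpr ⟨_, ht, by decide⟩) (by decide)
        · have ha' : a = 0 := by omega
          subst ha'
          have hd := hdisj _ ht _ hm00 (by decide)
          exact absurd (Finset.disjoint_left.mp hd (by decide)
            (by decide : ((0:ℤ),(0:ℤ)) ∈ (Tile.mono (0,0)).cells)) (fun h => h)
    exact hfour (1,1) ⟨Tile.mono (0,0), hm00, Tile.mono (0,1), h01, Tile.mono (1,0), h10,
      Tile.mono (1,1), hm11, by decide, by decide, by decide, by decide,
      by decide, by decide, by decide, by decide, by decide, by decide⟩
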